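/- arXiv:1504.04132 — 4 statements merged into one kernel-verified Lean document; each statement's English description precedes it below -/
import Mathlib

section
/- Suppose (a_{n1,n2} : n1, n2 ∈ ℕ) is a two-parameter sequence of complex numbers such that for every lacunary sequence (N_k : k ∈ ℕ) the oscillation seminorm O((a_{n1,n2}); (N_k)) = (∑_{k∈ℕ} sup_{N_k ≤ n1,n2 ≤ N_{k+1}} |a_{n1,n2} - a_{N_k,N_k}|²)^{1/2} is finite. Then the limit lim_{n1,n2→∞} a_{n1,n2} exists. -/
open scoped ENNReal

/-- If a two-parameter sequence of complex numbers has finite oscillation seminorm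
with respect to every lacunary sequence, then it converges. -/
theorem two_param_osc_finite_implies_convergent (a : ℕ → ℕ → ℂ)
    (hosc : ∀ N : ℕ → ℕ, ∀ τ : ℝ, 1 < τ → (∀ k : ℕ, τ * N k ≤ N (k + 1)) →
      (∑' k : ℕ,
        ⨆ n1 ∈ Set.Icc (N k) (N (k + 1)), ⨆ n2 ∈ Set.Icc (N k) (N (k + 1)),
          ((‖a n1 n2 - a (N k) (N k)‖₊ : ℝ≥0∞)) ^ 2) ≠ ∞) :
    ∃ l : ℂ, ∀ ε : ℝ, 0 < ε → ∃ M : ℕ, ∀ n1 n2 : ℕ,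
      M ≤ n1 → M ≤ n2 → ‖a n1 n2 - l‖ ≤ ε := by
  by_cases hC : ∀ ε : ℝ, 0 < ε → ∃ M : ℕ, ∀ n1 n2 m1 m2 : ℕ,
      M ≤ n1 → M ≤ n2 → M ≤ m1 → M ≤ m2 → ‖a n1 n2 - a m1 m2‖ ≤ ε
  · have hb : CauchySeq (fun n => a n n) := by
      rw [Metric.cauchySeq_iff]
      intro ε hε
      obtain ⟨M, hM⟩ := hC (ε / 2) (by linarith)
      refine ⟨M, fun m hm n hn => ?_⟩
      have := hM m m n n hm hm hn hn
      rw [dist_eq_norm]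
      linarith
    obtain ⟨l, hl⟩ := cauchySeq_tendsto_of_complete hb
    refine ⟨l, fun ε hε => ?_⟩
    obtain ⟨M, hM⟩ := hC (ε / 2) (by linarith)
    obtain ⟨M2, hM2⟩ := Metric.tendsto_atTop.mp hl (ε / 4) (by linarith)
    refine ⟨max M M2, fun n1 n2 h1 h2 => ?_⟩
    set m := max M M2 with hm
    have h3 : ‖a n1 n2 - a m m‖ ≤ ε / 2 :=
      hM n1 n2 m m (le_trans (le_max_left _ _) h1) (le_trans (le_max_left _ _) h2)
        (le_max_left _ _) (le_max_left _ _)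
    have h4 : ‖a m m - l‖ ≤ ε / 4 := by
      have := hM2 m (le_max_right _ _)
      rw [dist_eq_norm] at this
      linarith
    calc ‖a n1 n2 - l‖ ≤ ‖a n1 n2 - a m m‖ + ‖a m m - l‖ :=
          norm_sub_le_norm_sub_add_norm_sub _ _ _
      _ ≤ ε := by linarith
  · exfalso
    push_neg at hC
    obtain ⟨ε, hε, hbad⟩ := hC
    choose f1 f2 f3 f4 h1 h2 h3 h4 h5 using hbad
    set g : ℕ → ℕ := fun M => max (2 * M) (max (max (f1 M) (f2 M)) (max (f3 M) (f4 M)))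
      with hg
    set N : ℕ → ℕ := fun k => Nat.rec 1 (fun _ Nk => g Nk) k with hN
    have hNsucc : ∀ k, N (k + 1) = g (N k) := fun k => rfl
    have hlac : ∀ k : ℕ, (2 : ℝ) * N k ≤ N (k + 1) := by
      intro k
      rw [hNsucc]
      have : 2 * N k ≤ g (N k) := le_max_left _ _
      exact_mod_cast this
    apply hosc N 2 one_lt_two hlac
    -- each block contributes at least c
    set c : ℝ≥0∞ := ((ε / 2).toNNReal : ℝ≥0∞) ^ 2 with hc
    have hcne : c ≠ 0 := by
      simp [hc, Real.toNNReal_eq_zero]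
      linarith
    have hle : ∀ k : ℕ, c ≤
        ⨆ n1 ∈ Set.Icc (N k) (N (k + 1)), ⨆ n2 ∈ Set.Icc (N k) (N (k + 1)),
          ((‖a n1 n2 - a (N k) (N k)‖₊ : ℝ≥0∞)) ^ 2 := by
      intro k
      set M := N k with hM
      have hub : max (max (f1 M) (f2 M)) (max (f3 M) (f4 M)) ≤ N (k + 1) := by
        rw [hNsucc]; exact le_max_right _ _
      have hmem1 : f1 M ∈ Set.Icc (N k) (N (k + 1)) := by
        refine ⟨h1 M, le_trans ?_ hub⟩
        exact le_trans (le_max_left _ _) (le_max_left _ _)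
      have hmem2 : f2 M ∈ Set.Icc (N k) (N (k + 1)) := by
        refine ⟨h2 M, le_trans ?_ hub⟩
        exact le_trans (le_max_right _ _) (le_max_left _ _)
      have hmem3 : f3 M ∈ Set.Icc (N k) (N (k + 1)) := by
        refine ⟨h3 M, le_trans ?_ hub⟩
        exact le_trans (le_max_left _ _) (le_max_right _ _)
      have hmem4 : f4 M ∈ Set.Icc (N k) (N (k + 1)) := by
        refine ⟨h4 M, le_trans ?_ hub⟩
        exact le_trans (le_max_right _ _) (le_max_right _ _)
      have htri : ε ≤ ‖a (f1 M) (f2 M) - a M M‖ + ‖a (f3 M) (f4 M) - a M M‖ := by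
        have := h5 M
        calc ε ≤ ‖a (f1 M) (f2 M) - a (f3 M) (f4 M)‖ := le_of_lt this
          _ ≤ ‖a (f1 M) (f2 M) - a M M‖ + ‖a M M - a (f3 M) (f4 M)‖ :=
              norm_sub_le_norm_sub_add_norm_sub _ _ _
          _ = ‖a (f1 M) (f2 M) - a M M‖ + ‖a (f3 M) (f4 M) - a M M‖ := by
              rw [norm_sub_rev (a M M)]
      -- one of the two points has oscillation ≥ ε/2
      have key : ∃ x y : ℕ, x ∈ Set.Icc (N k) (N (k + 1)) ∧ y ∈ Set.Icc (N k) (N (k + 1)) ∧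
          ε / 2 ≤ ‖a x y - a M M‖ := by
        rcases le_or_gt (ε / 2) ‖a (f1 M) (f2 M) - a M M‖ with h | h
        · exact ⟨f1 M, f2 M, hmem1, hmem2, h⟩
        · exact ⟨f3 M, f4 M, hmem3, hmem4, by linarith⟩
      obtain ⟨x, y, hx, hy, hxy⟩ := key
      have hnn : ((ε / 2).toNNReal : ℝ≥0∞) ≤ (‖a x y - a M M‖₊ : ℝ≥0∞) := by
        rw [ENNReal.coe_le_coe]
        exact Real.toNNReal_le_iff_le_coe.mpr (by simpa using hxy)
      calc c ≤ ((‖a x y - a M M‖₊ : ℝ≥0∞)) ^ 2 := pow_le_pow_left' hnn 2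
        _ ≤ ⨆ n2 ∈ Set.Icc (N k) (N (k + 1)), ((‖a x n2 - a M M‖₊ : ℝ≥0∞)) ^ 2 :=
            le_biSup (fun n2 => ((‖a x n2 - a M M‖₊ : ℝ≥0∞)) ^ 2) hy
        _ ≤ ⨆ n1 ∈ Set.Icc (N k) (N (k + 1)), ⨆ n2 ∈ Set.Icc (N k) (N (k + 1)),
              ((‖a n1 n2 - a M M‖₊ : ℝ≥0∞)) ^ 2 :=
            le_biSup (fun n1 => ⨆ n2 ∈ Set.Icc (N k) (N (k + 1)),
              ((‖a n1 n2 - a M M‖₊ : ℝ≥0∞)) ^ 2) hx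
    have htop : (∑' _ : ℕ, c) = ∞ := ENNReal.tsum_const_eq_top_of_ne_zero hcne
    exact top_le_iff.mp (htop ▸ ENNReal.tsum_le_tsum hle)
end

section
/- For every sequence of complex numbers b = (b_n : n ∈ ℕ) and every s ∈ ℕ, one has 2 · sup_{0 ≤ m < n < 2^s} |b_n − b_m| ≤ 2√2 · ∑_{i=0}^{s} ( ∑_{j=1}^{2^{s−i}} |b_{j·2^i} − b_{(j−1)·2^i}|² )^{1/2}. In particular, for any n₀ ∈ {0,…,2^s − 1}, sup_{0 ≤ n < 2^s} |b_n − b_{n₀}| is bounded by the same right-hand side. -/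
open Finset

private noncomputable def rmS (b : ℕ → ℂ) (s i : ℕ) : ℝ :=
  Real.sqrt (∑ j ∈ Icc 1 (2 ^ (s - i)), ‖b (j * 2 ^ i) - b ((j - 1) * 2 ^ i)‖ ^ 2)

private lemma rmS_nonneg (b : ℕ → ℂ) (s i : ℕ) : 0 ≤ rmS b s i := Real.sqrt_nonneg _

private lemma rm_single (b : ℕ → ℂ) (s i q : ℕ) (hq : q ∈ Icc 1 (2 ^ (s - i))) :
    ‖b (q * 2 ^ i) - b ((q - 1) * 2 ^ i)‖ ≤ rmS b s i := by
  have h1 : ‖b (q * 2 ^ i) - b ((q - 1) * 2 ^ i)‖ ^ 2 ≤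
      ∑ j ∈ Icc 1 (2 ^ (s - i)), ‖b (j * 2 ^ i) - b ((j - 1) * 2 ^ i)‖ ^ 2 :=
    Finset.single_le_sum (f := fun j => ‖b (j * 2 ^ i) - b ((j - 1) * 2 ^ i)‖ ^ 2)
      (fun j _ => sq_nonneg _) hq
  have h2 := Real.sqrt_le_sqrt h1
  rwa [Real.sqrt_sq (norm_nonneg _)] at h2

private lemma rm_pair (b : ℕ → ℂ) (s i q r : ℕ) (hqr : q ≠ r)
    (hq : q ∈ Icc 1 (2 ^ (s - i))) (hr : r ∈ Icc 1 (2 ^ (s - i))) :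
    ‖b (q * 2 ^ i) - b ((q - 1) * 2 ^ i)‖ + ‖b (r * 2 ^ i) - b ((r - 1) * 2 ^ i)‖
      ≤ Real.sqrt 2 * rmS b s i := by
  set x := ‖b (q * 2 ^ i) - b ((q - 1) * 2 ^ i)‖ with hx
  set y := ‖b (r * 2 ^ i) - b ((r - 1) * 2 ^ i)‖ with hy
  have hx0 : 0 ≤ x := norm_nonneg _
  have hy0 : 0 ≤ y := norm_nonneg _
  have hsubset : ({q, r} : Finset ℕ) ⊆ Icc 1 (2 ^ (s - i)) := by
    intro z hz
    simp only [Finset.mem_insert, Finset.mem_singleton] at hz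
    rcases hz with rfl | rfl <;> assumption
  have hsub : x ^ 2 + y ^ 2 ≤
      ∑ j ∈ Icc 1 (2 ^ (s - i)), ‖b (j * 2 ^ i) - b ((j - 1) * 2 ^ i)‖ ^ 2 := by
    calc x ^ 2 + y ^ 2
        = ∑ j ∈ ({q, r} : Finset ℕ), ‖b (j * 2 ^ i) - b ((j - 1) * 2 ^ i)‖ ^ 2 := by
          rw [Finset.sum_pair hqr]
      _ ≤ _ := Finset.sum_le_sum_of_subset_of_nonneg hsubset (fun _ _ _ => sq_nonneg _)
  have h3 : (x + y) ^ 2 ≤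
      2 * ∑ j ∈ Icc 1 (2 ^ (s - i)), ‖b (j * 2 ^ i) - b ((j - 1) * 2 ^ i)‖ ^ 2 := by
    nlinarith [sq_nonneg (x - y)]
  calc x + y = Real.sqrt ((x + y) ^ 2) := (Real.sqrt_sq (by positivity)).symm
    _ ≤ Real.sqrt (2 * ∑ j ∈ Icc 1 (2 ^ (s - i)), ‖b (j * 2 ^ i) - b ((j - 1) * 2 ^ i)‖ ^ 2) :=
        Real.sqrt_le_sqrt h3
    _ = Real.sqrt 2 * rmS b s i := by rw [rmS, Real.sqrt_mul (by norm_num)]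

private lemma rm_term (b : ℕ → ℂ) (s x i : ℕ) (hx : x < 2 ^ s) (hi : i < s) :
    (x / 2 ^ i % 2 = 0 →
      b (x / 2 ^ i * 2 ^ i) - b (x / 2 ^ (i + 1) * 2 ^ (i + 1)) = 0) ∧
    (x / 2 ^ i % 2 = 1 →
      x / 2 ^ i ∈ Icc 1 (2 ^ (s - i)) ∧
      b (x / 2 ^ i * 2 ^ i) - b (x / 2 ^ (i + 1) * 2 ^ (i + 1)) =
        b (x / 2 ^ i * 2 ^ i) - b ((x / 2 ^ i - 1) * 2 ^ i)) := by
  set q := x / 2 ^ i with hq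
  have hdiv : x / 2 ^ (i + 1) = q / 2 := by
    rw [hq, pow_succ, ← Nat.div_div_eq_div_mul]
  have hqx : q * 2 ^ i ≤ x := by rw [hq]; exact Nat.div_mul_le_self x (2 ^ i)
  constructor
  · intro he
    have key : x / 2 ^ (i + 1) * 2 ^ (i + 1) = q / 2 * 2 * 2 ^ i := by
      rw [hdiv, pow_succ]; ring
    have h1 : q / 2 * 2 = q := by omega
    rw [key, h1, sub_self]
  · intro ho
    have h1 : q / 2 * 2 = q - 1 := by omega
    have key : x / 2 ^ (i + 1) * 2 ^ (i + 1) = q / 2 * 2 * 2 ^ i := by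
      rw [hdiv, pow_succ]; ring
    have h2 : 2 ^ (s - i) * 2 ^ i = 2 ^ s := by
      rw [← pow_add]; congr 1; omega
    have h3 : q * 2 ^ i < 2 ^ (s - i) * 2 ^ i := by
      rw [h2]; exact lt_of_le_of_lt hqx hx
    have h4 : q < 2 ^ (s - i) := lt_of_mul_lt_mul_right h3 (Nat.zero_le _)
    refine ⟨?_, by rw [key, h1]⟩
    rw [mem_Icc]
    omega

private lemma rm_main (b : ℕ → ℂ) (s m n : ℕ) (hmn : m < n) (hn : n < 2 ^ s) :
    ‖b n - b m‖ ≤ Real.sqrt 2 * ∑ i ∈ range (s + 1), rmS b s i := by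
  have hm : m < 2 ^ s := lt_trans hmn hn
  have hone : (1 : ℝ) ≤ Real.sqrt 2 := by
    rw [show (1 : ℝ) = Real.sqrt 1 by simp]
    exact Real.sqrt_le_sqrt (by norm_num)
  have htel : b n - b m = ∑ i ∈ range s,
      ((b (n / 2 ^ i * 2 ^ i) - b (n / 2 ^ (i + 1) * 2 ^ (i + 1))) -
       (b (m / 2 ^ i * 2 ^ i) - b (m / 2 ^ (i + 1) * 2 ^ (i + 1)))) := by
    rw [Finset.sum_sub_distrib,
      Finset.sum_range_sub' (fun i => b (n / 2 ^ i * 2 ^ i)) s,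
      Finset.sum_range_sub' (fun i => b (m / 2 ^ i * 2 ^ i)) s]
    simp only [pow_zero, Nat.div_one, mul_one, Nat.div_eq_of_lt hn, Nat.div_eq_of_lt hm,
      zero_mul]
    ring
  have hterm : ∀ i ∈ range s,
      ‖(b (n / 2 ^ i * 2 ^ i) - b (n / 2 ^ (i + 1) * 2 ^ (i + 1))) -
       (b (m / 2 ^ i * 2 ^ i) - b (m / 2 ^ (i + 1) * 2 ^ (i + 1)))‖ ≤
      Real.sqrt 2 * rmS b s i := by
    intro i hi
    rw [mem_range] at hi
    obtain ⟨hn0, hn1⟩ := rm_term b s n i hn hi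
    obtain ⟨hm0, hm1⟩ := rm_term b s m i hm hi
    rcases Nat.mod_two_eq_zero_or_one (n / 2 ^ i) with hqn | hqn <;>
      rcases Nat.mod_two_eq_zero_or_one (m / 2 ^ i) with hqm | hqm
    · rw [hn0 hqn, hm0 hqm, sub_self, norm_zero]
      exact mul_nonneg (Real.sqrt_nonneg 2) (rmS_nonneg b s i)
    · obtain ⟨hmem, heq⟩ := hm1 hqm
      rw [hn0 hqn, heq, zero_sub, norm_neg]
      have := rm_single b s i (m / 2 ^ i) hmem
      nlinarith [rmS_nonneg b s i]
    · obtain ⟨hmem, heq⟩ := hn1 hqn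
      rw [hm0 hqm, heq, sub_zero]
      have := rm_single b s i (n / 2 ^ i) hmem
      nlinarith [rmS_nonneg b s i]
    · obtain ⟨hmemn, heqn⟩ := hn1 hqn
      obtain ⟨hmemm, heqm⟩ := hm1 hqm
      by_cases hqr : n / 2 ^ i = m / 2 ^ i
      · rw [heqn, heqm, hqr, sub_self, norm_zero]
        exact mul_nonneg (Real.sqrt_nonneg 2) (rmS_nonneg b s i)
      · calc ‖_ - _‖ ≤ ‖b (n / 2 ^ i * 2 ^ i) - b (n / 2 ^ (i + 1) * 2 ^ (i + 1))‖ +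
              ‖b (m / 2 ^ i * 2 ^ i) - b (m / 2 ^ (i + 1) * 2 ^ (i + 1))‖ := norm_sub_le _ _
          _ = ‖b (n / 2 ^ i * 2 ^ i) - b ((n / 2 ^ i - 1) * 2 ^ i)‖ +
              ‖b (m / 2 ^ i * 2 ^ i) - b ((m / 2 ^ i - 1) * 2 ^ i)‖ := by rw [heqn, heqm]
          _ ≤ Real.sqrt 2 * rmS b s i := rm_pair b s i _ _ hqr hmemn hmemm
  calc ‖b n - b m‖
      = ‖∑ i ∈ range s,
          ((b (n / 2 ^ i * 2 ^ i) - b (n / 2 ^ (i + 1) * 2 ^ (i + 1))) -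
           (b (m / 2 ^ i * 2 ^ i) - b (m / 2 ^ (i + 1) * 2 ^ (i + 1))))‖ := by rw [← htel]
    _ ≤ ∑ i ∈ range s,
          ‖(b (n / 2 ^ i * 2 ^ i) - b (n / 2 ^ (i + 1) * 2 ^ (i + 1))) -
           (b (m / 2 ^ i * 2 ^ i) - b (m / 2 ^ (i + 1) * 2 ^ (i + 1)))‖ := norm_sum_le _ _
    _ ≤ ∑ i ∈ range s, Real.sqrt 2 * rmS b s i := Finset.sum_le_sum hterm
    _ = Real.sqrt 2 * ∑ i ∈ range s, rmS b s i := by rw [Finset.mul_sum]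
    _ ≤ Real.sqrt 2 * ∑ i ∈ range (s + 1), rmS b s i := by
        apply mul_le_mul_of_nonneg_left _ (Real.sqrt_nonneg 2)
        rw [Finset.sum_range_succ]
        have := rmS_nonneg b s s
        linarith

/-- One-parameter Rademacher--Menshov type numerical inequality: for every finite
sequence of complex numbers and every `s`,
`2 · sup_{0 ≤ m < n < 2^s} |b n − b m|` is bounded by
`2√2 · ∑_{i=0}^{s} (∑_{j=1}^{2^{s-i}} |b_{j2^i} − b_{(j-1)2^i}|²)^{1/2}`;
in particular so is `sup_{0 ≤ n < 2^s} |b n − b n₀|` for any `n₀ < 2^s`. -/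
theorem rademacher_menshov_one_param (b : ℕ → ℂ) (s : ℕ) :
    (∀ m n : ℕ, m < n → n < 2 ^ s →
      2 * ‖b n - b m‖ ≤ 2 * Real.sqrt 2 *
        ∑ i ∈ range (s + 1),
          Real.sqrt (∑ j ∈ Icc 1 (2 ^ (s - i)),
            ‖b (j * 2 ^ i) - b ((j - 1) * 2 ^ i)‖ ^ 2)) ∧
    (∀ n₀ n : ℕ, n₀ < 2 ^ s → n < 2 ^ s →
      ‖b n - b n₀‖ ≤ 2 * Real.sqrt 2 *
        ∑ i ∈ range (s + 1),
          Real.sqrt (∑ j ∈ Icc 1 (2 ^ (s - i)),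
            ‖b (j * 2 ^ i) - b ((j - 1) * 2 ^ i)‖ ^ 2)) := by
  have hT : (0:ℝ) ≤ ∑ i ∈ range (s + 1), rmS b s i :=
    Finset.sum_nonneg fun i _ => rmS_nonneg b s i
  have key : ∀ m n : ℕ, m < n → n < 2 ^ s →
      ‖b n - b m‖ ≤ Real.sqrt 2 * ∑ i ∈ range (s + 1), rmS b s i :=
    fun m n hmn hn => rm_main b s m n hmn hn
  have hs2 : (0:ℝ) ≤ Real.sqrt 2 := Real.sqrt_nonneg 2
  constructor
  · intro m n hmn hn
    have h := key m n hmn hn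
    have h2 : 2 * ‖b n - b m‖ ≤ 2 * Real.sqrt 2 * ∑ i ∈ range (s + 1), rmS b s i := by
      set T := ∑ i ∈ range (s + 1), rmS b s i
      linarith
    simpa [rmS] using h2
  · intro n₀ n h₀ hn
    have h2 : ‖b n - b n₀‖ ≤ 2 * Real.sqrt 2 * ∑ i ∈ range (s + 1), rmS b s i := by
      rcases lt_trichotomy n n₀ with h | h | h
      · have hk := key n n₀ h h₀
        rw [norm_sub_rev] at hk
        set T := ∑ i ∈ range (s + 1), rmS b s i
        nlinarith
      · subst h
        rw [sub_self, norm_zero]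
        set T := ∑ i ∈ range (s + 1), rmS b s i
        nlinarith
      · have hk := key n₀ n h hn
        set T := ∑ i ∈ range (s + 1), rmS b s i
        nlinarith
    simpa [rmS] using h2
end

section
/- For every two-parameter sequence of complex numbers a = (a_{n1,n2} : n1,n2 ∈ ℕ), all s1, s2 ∈ ℕ, and any n1⁰ ∈ {0,…,2^{s1}−1}, n2⁰ ∈ {0,…,2^{s2}−1}: sup_{0 ≤ n1 < 2^{s1}} sup_{0 ≤ n2 < 2^{s2}} |a_{n1,n2}| ≤ 8 ∑_{i1=0}^{s1} ∑_{i2=0}^{s2} ( ∑_{j1=1}^{2^{s1−i1}} ∑_{j2=1}^{2^{s2−i2}} | ∑_{k1 ∈ I_{j1}^{i1}} ∑_{k2 ∈ I_{j2}^{i2}} Δ_{k1,k2}(a) |² )^{1/2} + 2√2 ∑_{i1=0}^{s1} ( ∑_{j1=1}^{2^{s1−i1}} | ∑_{k1 ∈ I_{j1}^{i1}} Δ¹_{k1,n2⁰}(a) |² )^{1/2} + 2√2 ∑_{i2=0}^{s2} ( ∑_{j2=1}^{2^{s2−i2}} | ∑_{k2 ∈ I_{j2}^{i2}} Δ²_{n1⁰,k2}(a)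 |² )^{1/2} + |a_{n1⁰,n2⁰}|. -/
set_option maxHeartbeats 1000000

open Finset

private lemma telescope1 (f : ℕ → ℂ) (n : ℕ) :
    ∑ k ∈ Ioc 0 n, (f k - f (k - 1)) = f n - f 0 := by
  induction n with
  | zero => simp
  | succ n ih =>
      rw [Finset.sum_Ioc_succ_top (Nat.zero_le n), ih]
      simp only [Nat.add_sub_cancel]
      ring

private lemma mstep_le (n i : ℕ) : n / 2 ^ (i + 1) * 2 ^ (i + 1) ≤ n / 2 ^ i * 2 ^ i := by
  have h : n / 2 ^ (i + 1) = n / 2 ^ i / 2 := by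
    rw [pow_succ, Nat.div_div_eq_div_mul]
  rw [h, pow_succ]
  calc n / 2 ^ i / 2 * (2 ^ i * 2) = n / 2 ^ i / 2 * 2 * 2 ^ i := by ring
    _ ≤ n / 2 ^ i * 2 ^ i := Nat.mul_le_mul_right _ (Nat.div_mul_le_self _ _)

private lemma decomp_aux (b : ℕ → ℂ) (n : ℕ) : ∀ t : ℕ,
    ∑ i ∈ range t, ∑ k ∈ Ioc (n / 2 ^ (i + 1) * 2 ^ (i + 1)) (n / 2 ^ i * 2 ^ i), b k
      = ∑ k ∈ Ioc (n / 2 ^ t * 2 ^ t) n, b k := by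
  intro t
  induction t with
  | zero => simp
  | succ t ih =>
      rw [Finset.sum_range_succ, ih, add_comm]
      exact Finset.sum_Ioc_consecutive b (mstep_le n t)
        (by simpa using Nat.div_mul_le_self n (2 ^ t))

private lemma decomp (b : ℕ → ℂ) (s n : ℕ) (hn : n < 2 ^ s) :
    ∑ k ∈ Ioc 0 n, b k
      = ∑ i ∈ range s, ∑ k ∈ Ioc (n / 2 ^ (i + 1) * 2 ^ (i + 1)) (n / 2 ^ i * 2 ^ i), b k := by
  rw [decomp_aux b n s, Nat.div_eq_of_lt hn, Nat.zero_mul]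

private lemma block_eq (s n i : ℕ) (hn : n < 2 ^ s)
    (hne : n / 2 ^ (i + 1) * 2 ^ (i + 1) ≠ n / 2 ^ i * 2 ^ i) :
    ∃ j, 1 ≤ j ∧ j ≤ 2 ^ (s - i) ∧ i ≤ s ∧
      n / 2 ^ (i + 1) * 2 ^ (i + 1) = (j - 1) * 2 ^ i ∧ n / 2 ^ i * 2 ^ i = j * 2 ^ i := by
  set q := n / 2 ^ i with hq
  have hdiv : n / 2 ^ (i + 1) = q / 2 := by rw [hq, pow_succ, Nat.div_div_eq_div_mul]
  have hmod := Nat.div_add_mod q 2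
  rcases Nat.mod_two_eq_zero_or_one q with h0 | h1
  · exfalso
    have hqe : q = 2 * (q / 2) := by omega
    apply hne
    rw [hdiv, pow_succ]
    calc q / 2 * (2 ^ i * 2) = 2 * (q / 2) * 2 ^ i := by ring
      _ = q * 2 ^ i := by rw [← hqe]
  · have hi : i ≤ s := by
      by_contra his
      push_neg at his
      have h1' : n < 2 ^ i := lt_of_lt_of_le hn (Nat.pow_le_pow_right (by norm_num) (by omega))
      have : q = 0 := Nat.div_eq_of_lt h1'
      omega
    refine ⟨q, by omega, ?_, hi, ?_, rfl⟩
    · by_contra hlt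
      push_neg at hlt
      have h2' : 2 ^ (s - i) * 2 ^ i ≤ q * 2 ^ i := Nat.mul_le_mul_right _ (by omega)
      rw [← pow_add] at h2'
      have hsi : s - i + i = s := by omega
      rw [hsi] at h2'
      have : 2 ^ s ≤ n := le_trans h2' (Nat.div_mul_le_self n _)
      omega
    · rw [hdiv, pow_succ]
      have h2 : q / 2 * 2 = q - 1 := by omega
      calc q / 2 * (2 ^ i * 2) = q / 2 * 2 * 2 ^ i := by ring
        _ = (q - 1) * 2 ^ i := by rw [h2]

private lemma oneD (b : ℕ → ℂ) (s n : ℕ) (hn : n < 2 ^ s) :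
    ‖∑ k ∈ Ioc 0 n, b k‖ ≤
      ∑ i ∈ range (s + 1), Real.sqrt (∑ j ∈ Icc 1 (2 ^ (s - i)),
        ‖∑ k ∈ Ioc ((j - 1) * 2 ^ i) (j * 2 ^ i), b k‖ ^ 2) := by
  rw [decomp b s n hn]
  refine le_trans (norm_sum_le _ _) ?_
  refine le_trans (Finset.sum_le_sum
    (g := fun i => Real.sqrt (∑ j ∈ Icc 1 (2 ^ (s - i)),
        ‖∑ k ∈ Ioc ((j - 1) * 2 ^ i) (j * 2 ^ i), b k‖ ^ 2)) ?_) ?_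
  · intro i _
    by_cases hne : n / 2 ^ (i + 1) * 2 ^ (i + 1) = n / 2 ^ i * 2 ^ i
    · rw [hne]
      simp [Real.sqrt_nonneg]
    · obtain ⟨j, hj1, hj2, _, he1, he2⟩ := block_eq s n i hn hne
      rw [he1, he2]
      refine Real.le_sqrt_of_sq_le ?_
      exact Finset.single_le_sum (f := fun j => ‖∑ k ∈ Ioc ((j - 1) * 2 ^ i) (j * 2 ^ i), b k‖ ^ 2)
        (fun j _ => sq_nonneg _) (Finset.mem_Icc.mpr ⟨hj1, hj2⟩)
  · exact Finset.sum_le_sum_of_subset_of_nonneg (Finset.range_subset_range.mpr (Nat.le_succ s))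
      (fun i _ _ => Real.sqrt_nonneg _)

private lemma twoD (b : ℕ → ℕ → ℂ) (s1 s2 n1 n2 : ℕ) (h1 : n1 < 2 ^ s1) (h2 : n2 < 2 ^ s2) :
    ‖∑ k1 ∈ Ioc 0 n1, ∑ k2 ∈ Ioc 0 n2, b k1 k2‖ ≤
      ∑ i1 ∈ range (s1 + 1), ∑ i2 ∈ range (s2 + 1),
        Real.sqrt (∑ j1 ∈ Icc 1 (2 ^ (s1 - i1)), ∑ j2 ∈ Icc 1 (2 ^ (s2 - i2)),
          ‖∑ k1 ∈ Ioc ((j1 - 1) * 2 ^ i1) (j1 * 2 ^ i1),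
            ∑ k2 ∈ Ioc ((j2 - 1) * 2 ^ i2) (j2 * 2 ^ i2), b k1 k2‖ ^ 2) := by
  have key : ∑ k1 ∈ Ioc 0 n1, ∑ k2 ∈ Ioc 0 n2, b k1 k2
      = ∑ i1 ∈ range s1, ∑ i2 ∈ range s2,
          ∑ k1 ∈ Ioc (n1 / 2 ^ (i1 + 1) * 2 ^ (i1 + 1)) (n1 / 2 ^ i1 * 2 ^ i1),
            ∑ k2 ∈ Ioc (n2 / 2 ^ (i2 + 1) * 2 ^ (i2 + 1)) (n2 / 2 ^ i2 * 2 ^ i2), b k1 k2 := by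
    rw [decomp (fun k1 => ∑ k2 ∈ Ioc 0 n2, b k1 k2) s1 n1 h1]
    refine Finset.sum_congr rfl fun i1 _ => ?_
    rw [Finset.sum_comm]
    rw [decomp (fun k2 => ∑ k1 ∈ Ioc (n1 / 2 ^ (i1 + 1) * 2 ^ (i1 + 1)) (n1 / 2 ^ i1 * 2 ^ i1),
      b k1 k2) s2 n2 h2]
    refine Finset.sum_congr rfl fun i2 _ => ?_
    rw [Finset.sum_comm]
  rw [key]
  have hterm : ∀ i1 i2 : ℕ,
      ‖∑ k1 ∈ Ioc (n1 / 2 ^ (i1 + 1) * 2 ^ (i1 + 1)) (n1 / 2 ^ i1 * 2 ^ i1),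
          ∑ k2 ∈ Ioc (n2 / 2 ^ (i2 + 1) * 2 ^ (i2 + 1)) (n2 / 2 ^ i2 * 2 ^ i2), b k1 k2‖ ≤
        Real.sqrt (∑ j1 ∈ Icc 1 (2 ^ (s1 - i1)), ∑ j2 ∈ Icc 1 (2 ^ (s2 - i2)),
          ‖∑ k1 ∈ Ioc ((j1 - 1) * 2 ^ i1) (j1 * 2 ^ i1),
            ∑ k2 ∈ Ioc ((j2 - 1) * 2 ^ i2) (j2 * 2 ^ i2), b k1 k2‖ ^ 2) := by
    intro i1 i2
    by_cases hne1 : n1 / 2 ^ (i1 + 1) * 2 ^ (i1 + 1) = n1 / 2 ^ i1 * 2 ^ i1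
    · rw [hne1]; simp [Real.sqrt_nonneg]
    by_cases hne2 : n2 / 2 ^ (i2 + 1) * 2 ^ (i2 + 1) = n2 / 2 ^ i2 * 2 ^ i2
    · rw [hne2]; simp [Real.sqrt_nonneg]
    obtain ⟨j1, hj11, hj12, _, he11, he12⟩ := block_eq s1 n1 i1 h1 hne1
    obtain ⟨j2, hj21, hj22, _, he21, he22⟩ := block_eq s2 n2 i2 h2 hne2
    rw [he11, he12, he21, he22]
    refine Real.le_sqrt_of_sq_le ?_
    refine le_trans (Finset.single_le_sum (f := fun j2' =>
            ‖∑ k1 ∈ Ioc ((j1 - 1) * 2 ^ i1) (j1 * 2 ^ i1),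
              ∑ k2 ∈ Ioc ((j2' - 1) * 2 ^ i2) (j2' * 2 ^ i2), b k1 k2‖ ^ 2)
      (fun _ _ => sq_nonneg _) (Finset.mem_Icc.mpr ⟨hj21, hj22⟩)) ?_
    exact Finset.single_le_sum (f := fun j1' => ∑ j2' ∈ Icc 1 (2 ^ (s2 - i2)),
            ‖∑ k1 ∈ Ioc ((j1' - 1) * 2 ^ i1) (j1' * 2 ^ i1),
              ∑ k2 ∈ Ioc ((j2' - 1) * 2 ^ i2) (j2' * 2 ^ i2), b k1 k2‖ ^ 2)
            (fun _ _ => Finset.sum_nonneg fun _ _ => sq_nonneg _)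
            (Finset.mem_Icc.mpr ⟨hj11, hj12⟩)
  refine le_trans (norm_sum_le _ _) ?_
  refine le_trans (Finset.sum_le_sum (g := fun i1 => ∑ i2 ∈ range (s2 + 1),
        Real.sqrt (∑ j1 ∈ Icc 1 (2 ^ (s1 - i1)), ∑ j2 ∈ Icc 1 (2 ^ (s2 - i2)),
          ‖∑ k1 ∈ Ioc ((j1 - 1) * 2 ^ i1) (j1 * 2 ^ i1),
            ∑ k2 ∈ Ioc ((j2 - 1) * 2 ^ i2) (j2 * 2 ^ i2), b k1 k2‖ ^ 2)) ?_) ?_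
  · intro i1 _
    refine le_trans (norm_sum_le _ _) ?_
    refine le_trans (Finset.sum_le_sum (g := fun i2 =>
        Real.sqrt (∑ j1 ∈ Icc 1 (2 ^ (s1 - i1)), ∑ j2 ∈ Icc 1 (2 ^ (s2 - i2)),
          ‖∑ k1 ∈ Ioc ((j1 - 1) * 2 ^ i1) (j1 * 2 ^ i1),
            ∑ k2 ∈ Ioc ((j2 - 1) * 2 ^ i2) (j2 * 2 ^ i2), b k1 k2‖ ^ 2))
      (fun i2 _ => hterm i1 i2)) ?_
    exact Finset.sum_le_sum_of_subset_of_nonneg (Finset.range_subset_range.mpr (Nat.le_succ s2))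
      (fun _ _ _ => Real.sqrt_nonneg _)
  · exact Finset.sum_le_sum_of_subset_of_nonneg (Finset.range_subset_range.mpr (Nat.le_succ s1))
      (fun _ _ _ => Finset.sum_nonneg fun _ _ => Real.sqrt_nonneg _)

private lemma telescope2 (a : ℕ → ℕ → ℂ) (m n : ℕ) :
    ∑ k1 ∈ Ioc 0 m, ∑ k2 ∈ Ioc 0 n,
        (a k1 k2 - a k1 (k2 - 1) - a (k1 - 1) k2 + a (k1 - 1) (k2 - 1))
      = a m n - a m 0 - a 0 n + a 0 0 := by
  have inner : ∀ k1 : ℕ, ∑ k2 ∈ Ioc 0 n,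
      (a k1 k2 - a k1 (k2 - 1) - a (k1 - 1) k2 + a (k1 - 1) (k2 - 1))
      = (a k1 n - a k1 0) - (a (k1 - 1) n - a (k1 - 1) 0) := by
    intro k1
    have t := telescope1 (fun k2 => a k1 k2 - a (k1 - 1) k2) n
    refine Eq.trans (Finset.sum_congr rfl fun k2 _ => ?_) (t.trans (by ring))
    show _ = (a k1 k2 - a (k1 - 1) k2) - (a k1 (k2 - 1) - a (k1 - 1) (k2 - 1))
    ring
  have t2 := telescope1 (fun k1 => a k1 n - a k1 0) m
  refine Eq.trans (Finset.sum_congr rfl fun k1 _ => inner k1) (t2.trans (by ring))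

private lemma twoD_diff (a : ℕ → ℕ → ℂ) (s1 s2 n1 n2 : ℕ) (h1 : n1 < 2 ^ s1)
    (h2 : n2 < 2 ^ s2) :
    ‖a n1 n2 - a n1 0 - a 0 n2 + a 0 0‖ ≤
      ∑ i1 ∈ range (s1 + 1), ∑ i2 ∈ range (s2 + 1),
        Real.sqrt (∑ j1 ∈ Icc 1 (2 ^ (s1 - i1)), ∑ j2 ∈ Icc 1 (2 ^ (s2 - i2)),
          ‖∑ k1 ∈ Ioc ((j1 - 1) * 2 ^ i1) (j1 * 2 ^ i1),
            ∑ k2 ∈ Ioc ((j2 - 1) * 2 ^ i2) (j2 * 2 ^ i2),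
              (a k1 k2 - a k1 (k2 - 1) - a (k1 - 1) k2 + a (k1 - 1) (k2 - 1))‖ ^ 2) := by
  rw [← telescope2 a n1 n2]
  exact twoD (fun k1 k2 => a k1 k2 - a k1 (k2 - 1) - a (k1 - 1) k2 + a (k1 - 1) (k2 - 1))
    s1 s2 n1 n2 h1 h2

private lemma oneD_diff1 (a : ℕ → ℕ → ℂ) (m s n : ℕ) (hn : n < 2 ^ s) :
    ‖a n m - a 0 m‖ ≤
      ∑ i ∈ range (s + 1), Real.sqrt (∑ j ∈ Icc 1 (2 ^ (s - i)),
        ‖∑ k ∈ Ioc ((j - 1) * 2 ^ i) (j * 2 ^ i), (a k m - a (k - 1) m)‖ ^ 2) := by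
  have t := telescope1 (fun k => a k m) n
  rw [show a n m - a 0 m = ∑ k ∈ Ioc 0 n, (a k m - a (k - 1) m) from (Eq.trans
    (Finset.sum_congr rfl fun k _ => rfl) t).symm]
  exact oneD (fun k => a k m - a (k - 1) m) s n hn

private lemma oneD_diff2 (a : ℕ → ℕ → ℂ) (m s n : ℕ) (hn : n < 2 ^ s) :
    ‖a m n - a m 0‖ ≤
      ∑ i ∈ range (s + 1), Real.sqrt (∑ j ∈ Icc 1 (2 ^ (s - i)),
        ‖∑ k ∈ Ioc ((j - 1) * 2 ^ i) (j * 2 ^ i), (a m k - a m (k - 1))‖ ^ 2) := by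
  have t := telescope1 (fun k => a m k) n
  rw [show a m n - a m 0 = ∑ k ∈ Ioc 0 n, (a m k - a m (k - 1)) from (Eq.trans
    (Finset.sum_congr rfl fun k _ => rfl) t).symm]
  exact oneD (fun k => a m k - a m (k - 1)) s n hn

private lemma norm_four (x y z w : ℂ) : ‖x + y + z + w‖ ≤ ‖x‖ + ‖y‖ + ‖z‖ + ‖w‖ := by
  have h1 := norm_add_le (x + y + z) w
  have h2 := norm_add_le (x + y) z
  have h3 := norm_add_le x y
  linarith

private lemma norm_comb4 (x y z w : ℂ) : ‖x - y - z + w‖ ≤ ‖x‖ + ‖y‖ + ‖z‖ + ‖w‖ := by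
  have h1 := norm_add_le (x - y - z) w
  have h2 := norm_sub_le (x - y) z
  have h3 := norm_sub_le x y
  linarith

/-- Two-parameter Rademacher--Menshov type numerical inequality (Lemma 1). Here
`I_j^i = ((j-1)·2^i, j·2^i] ∩ ℕ`, the double difference is
`Δ_{k1,k2}(a) = a_{k1,k2} - a_{k1,k2-1} - a_{k1-1,k2} + a_{k1-1,k2-1}` and the single
differences are `Δ¹_{k1,n}(a) = a_{k1,n} - a_{k1-1,n}`, `Δ²_{n,k2}(a) = a_{n,k2} - a_{n,k2-1}`. -/
theorem rademacher_menshov_two_param (a : ℕ → ℕ → ℂ) (s1 s2 : ℕ)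
    (n1₀ n2₀ : ℕ) (hn1₀ : n1₀ < 2 ^ s1) (hn2₀ : n2₀ < 2 ^ s2) :
    ∀ n1 n2 : ℕ, n1 < 2 ^ s1 → n2 < 2 ^ s2 →
      ‖a n1 n2‖ ≤
        8 * ∑ i1 ∈ range (s1 + 1), ∑ i2 ∈ range (s2 + 1),
          Real.sqrt (∑ j1 ∈ Icc 1 (2 ^ (s1 - i1)), ∑ j2 ∈ Icc 1 (2 ^ (s2 - i2)),
            ‖∑ k1 ∈ Ioc ((j1 - 1) * 2 ^ i1) (j1 * 2 ^ i1),
              ∑ k2 ∈ Ioc ((j2 - 1) * 2 ^ i2) (j2 * 2 ^ i2),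
                (a k1 k2 - a k1 (k2 - 1) - a (k1 - 1) k2 + a (k1 - 1) (k2 - 1))‖ ^ 2)
        + 2 * Real.sqrt 2 * ∑ i1 ∈ range (s1 + 1),
          Real.sqrt (∑ j1 ∈ Icc 1 (2 ^ (s1 - i1)),
            ‖∑ k1 ∈ Ioc ((j1 - 1) * 2 ^ i1) (j1 * 2 ^ i1),
              (a k1 n2₀ - a (k1 - 1) n2₀)‖ ^ 2)
        + 2 * Real.sqrt 2 * ∑ i2 ∈ range (s2 + 1),
          Real.sqrt (∑ j2 ∈ Icc 1 (2 ^ (s2 - i2)),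
            ‖∑ k2 ∈ Ioc ((j2 - 1) * 2 ^ i2) (j2 * 2 ^ i2),
              (a n1₀ k2 - a n1₀ (k2 - 1))‖ ^ 2)
        + ‖a n1₀ n2₀‖ := by
  intro n1 n2 hn1 hn2
  have hP11 := twoD_diff a s1 s2 n1 n2 hn1 hn2
  have hP01 := twoD_diff a s1 s2 n1₀ n2 hn1₀ hn2
  have hP10 := twoD_diff a s1 s2 n1 n2₀ hn1 hn2₀
  have hP00 := twoD_diff a s1 s2 n1₀ n2₀ hn1₀ hn2₀
  have hY1 := oneD_diff1 a n2₀ s1 n1 hn1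
  have hY0 := oneD_diff1 a n2₀ s1 n1₀ hn1₀
  have hZ1 := oneD_diff2 a n1₀ s2 n2 hn2
  have hZ0 := oneD_diff2 a n1₀ s2 n2₀ hn2₀
  have hS0 : (0:ℝ) ≤ ∑ i1 ∈ range (s1 + 1), ∑ i2 ∈ range (s2 + 1),
      Real.sqrt (∑ j1 ∈ Icc 1 (2 ^ (s1 - i1)), ∑ j2 ∈ Icc 1 (2 ^ (s2 - i2)),
        ‖∑ k1 ∈ Ioc ((j1 - 1) * 2 ^ i1) (j1 * 2 ^ i1),
          ∑ k2 ∈ Ioc ((j2 - 1) * 2 ^ i2) (j2 * 2 ^ i2),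
            (a k1 k2 - a k1 (k2 - 1) - a (k1 - 1) k2 + a (k1 - 1) (k2 - 1))‖ ^ 2) :=
    Finset.sum_nonneg fun _ _ => Finset.sum_nonneg fun _ _ => Real.sqrt_nonneg _
  have hT10 : (0:ℝ) ≤ ∑ i1 ∈ range (s1 + 1),
      Real.sqrt (∑ j1 ∈ Icc 1 (2 ^ (s1 - i1)),
        ‖∑ k1 ∈ Ioc ((j1 - 1) * 2 ^ i1) (j1 * 2 ^ i1),
          (a k1 n2₀ - a (k1 - 1) n2₀)‖ ^ 2) :=
    Finset.sum_nonneg fun _ _ => Real.sqrt_nonneg _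
  have hT20 : (0:ℝ) ≤ ∑ i2 ∈ range (s2 + 1),
      Real.sqrt (∑ j2 ∈ Icc 1 (2 ^ (s2 - i2)),
        ‖∑ k2 ∈ Ioc ((j2 - 1) * 2 ^ i2) (j2 * 2 ^ i2),
          (a n1₀ k2 - a n1₀ (k2 - 1))‖ ^ 2) :=
    Finset.sum_nonneg fun _ _ => Real.sqrt_nonneg _
  have hsqrt2 : (1:ℝ) ≤ Real.sqrt 2 := by
    have h := Real.sqrt_le_sqrt (show (1:ℝ) ≤ 2 by norm_num)
    rwa [Real.sqrt_one] at h
  have h0 : ‖a n1 n2‖ ≤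
      ‖(a n1 n2 - a n1 0 - a 0 n2 + a 0 0) - (a n1₀ n2 - a n1₀ 0 - a 0 n2 + a 0 0)
        - (a n1 n2₀ - a n1 0 - a 0 n2₀ + a 0 0) + (a n1₀ n2₀ - a n1₀ 0 - a 0 n2₀ + a 0 0)‖
      + ‖(a n1 n2₀ - a 0 n2₀) - (a n1₀ n2₀ - a 0 n2₀)‖
      + ‖(a n1₀ n2 - a n1₀ 0) - (a n1₀ n2₀ - a n1₀ 0)‖
      + ‖a n1₀ n2₀‖ := by
    calc ‖a n1 n2‖
        = ‖((a n1 n2 - a n1 0 - a 0 n2 + a 0 0) - (a n1₀ n2 - a n1₀ 0 - a 0 n2 + a 0 0)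
            - (a n1 n2₀ - a n1 0 - a 0 n2₀ + a 0 0) + (a n1₀ n2₀ - a n1₀ 0 - a 0 n2₀ + a 0 0))
          + ((a n1 n2₀ - a 0 n2₀) - (a n1₀ n2₀ - a 0 n2₀))
          + ((a n1₀ n2 - a n1₀ 0) - (a n1₀ n2₀ - a n1₀ 0))
          + a n1₀ n2₀‖ := by ring_nf
      _ ≤ _ := norm_four _ _ _ _
  have hX : ‖(a n1 n2 - a n1 0 - a 0 n2 + a 0 0) - (a n1₀ n2 - a n1₀ 0 - a 0 n2 + a 0 0)
        - (a n1 n2₀ - a n1 0 - a 0 n2₀ + a 0 0) + (a n1₀ n2₀ - a n1₀ 0 - a 0 n2₀ + a 0 0)‖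
      ≤ ‖a n1 n2 - a n1 0 - a 0 n2 + a 0 0‖ + ‖a n1₀ n2 - a n1₀ 0 - a 0 n2 + a 0 0‖
        + ‖a n1 n2₀ - a n1 0 - a 0 n2₀ + a 0 0‖ + ‖a n1₀ n2₀ - a n1₀ 0 - a 0 n2₀ + a 0 0‖ :=
    norm_comb4 _ _ _ _
  have hYb := norm_sub_le (a n1 n2₀ - a 0 n2₀) (a n1₀ n2₀ - a 0 n2₀)
  have hZb := norm_sub_le (a n1₀ n2 - a n1₀ 0) (a n1₀ n2₀ - a n1₀ 0)
  have h2T1 : 2 * (∑ i1 ∈ range (s1 + 1),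
      Real.sqrt (∑ j1 ∈ Icc 1 (2 ^ (s1 - i1)),
        ‖∑ k1 ∈ Ioc ((j1 - 1) * 2 ^ i1) (j1 * 2 ^ i1),
          (a k1 n2₀ - a (k1 - 1) n2₀)‖ ^ 2)) ≤ 2 * Real.sqrt 2 * (∑ i1 ∈ range (s1 + 1),
      Real.sqrt (∑ j1 ∈ Icc 1 (2 ^ (s1 - i1)),
        ‖∑ k1 ∈ Ioc ((j1 - 1) * 2 ^ i1) (j1 * 2 ^ i1),
          (a k1 n2₀ - a (k1 - 1) n2₀)‖ ^ 2)) := by nlinarith [hsqrt2, hT10]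
  have h2T2 : 2 * (∑ i2 ∈ range (s2 + 1),
      Real.sqrt (∑ j2 ∈ Icc 1 (2 ^ (s2 - i2)),
        ‖∑ k2 ∈ Ioc ((j2 - 1) * 2 ^ i2) (j2 * 2 ^ i2),
          (a n1₀ k2 - a n1₀ (k2 - 1))‖ ^ 2)) ≤ 2 * Real.sqrt 2 * (∑ i2 ∈ range (s2 + 1),
      Real.sqrt (∑ j2 ∈ Icc 1 (2 ^ (s2 - i2)),
        ‖∑ k2 ∈ Ioc ((j2 - 1) * 2 ^ i2) (j2 * 2 ^ i2),
          (a n1₀ k2 - a n1₀ (k2 - 1))‖ ^ 2)) := by nlinarith [hsqrt2, hT20]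
  linarith
end

section
/- Fix w = (w1, w2) ∈ ℕ² and partition ℕ₀² into the four regions U_w^{00} = [0,w1)×[0,w2), U_w^{01} = [0,w1)×[w2,∞), U_w^{10} = [w1,∞)×[0,w2), U_w^{11} = [w1,∞)×[w2,∞). Then for any lacunary sequence (N_k) and any two-parameter sequence (a_{n1,n2}) of complex numbers, the oscillation seminorm satisfies O(a) ≤ 4·sup_{n1,n2} |a_{n1,n2}| + ∑_{μ ∈ {0,1}²} O_μ(a), where O_μ(a) = ( ∑_{k ∈ K_μ} sup_{N_k ≤ n1,n2 ≤ N_{k+1}} |a_{n1,n2} − a_{N_k,N_k}|² )^{1/2} and K_μ = { k : (N_k,N_k), (N_{k+1},N_{k+1}) ∈ U_w^μ }. -/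
/-!
Lacunarity makes `N` monotone, so the diagonal points `(N k, N k)` cross each of the lines
`n1 = w1`, `n2 = w2` at most once. Every other block `[N k, N (k+1)]` has both corners in one
quadrant and is counted in some `O_μ`, while each of the at most two crossing blocks contributes
at most `(2 sup |a|)²` to `O(a)²`; subadditivity of the square root finishes the proof.
-/

open scoped ENNReal

lemma monotone_of_lacunary {N : ℕ → ℕ} {τ : ℝ} (hτ : 1 ≤ τ)
    (hlac : ∀ k : ℕ, τ * N k ≤ N (k + 1)) : Monotone N :=
  monotone_nat_of_le_succ fun k => by
    exact_mod_cast (le_mul_of_one_le_left (Nat.cast_nonneg _) hτ).trans (hlac k)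

def crossings (N : ℕ → ℕ) (w : ℕ) : Set ℕ := {k | N k < w ∧ w ≤ N (k + 1)}

lemma Monotone.crossings_subsingleton {N : ℕ → ℕ} (hN : Monotone N) (w : ℕ) :
    (crossings N w).Subsingleton := by
  suffices ∀ k l, k ∈ crossings N w → l ∈ crossings N w → ¬ k < l from
    fun k hk l hl => le_antisymm (not_lt.1 (this l k hl hk)) (not_lt.1 (this k l hk hl))
  intro k l hk hl hkl
  exact (hk.2.trans (hN hkl)).not_gt hl.1

def quadrant (w1 w2 : ℕ) (μ : Bool × Bool) : Set (ℕ × ℕ) :=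
  {p | (if μ.1 then w1 ≤ p.1 else p.1 < w1) ∧ (if μ.2 then w2 ≤ p.2 else p.2 < w2)}

def quadrantSteps (N : ℕ → ℕ) (w1 w2 : ℕ) (μ : Bool × Bool) : Set ℕ :=
  {k | (N k, N k) ∈ quadrant w1 w2 μ ∧ (N (k + 1), N (k + 1)) ∈ quadrant w1 w2 μ}

lemma Monotone.mem_crossings_or_quadrantSteps {N : ℕ → ℕ} (hN : Monotone N) (w1 w2 k : ℕ) :
    k ∈ crossings N w1 ∪ crossings N w2 ∪ ⋃ μ, quadrantSteps N w1 w2 μ := by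
  have hk := hN (Nat.le_add_right k 1)
  by_cases h1 : k ∈ crossings N w1
  · exact Or.inl (Or.inl h1)
  by_cases h2 : k ∈ crossings N w2
  · exact Or.inl (Or.inr h2)
  refine Or.inr (Set.mem_iUnion.2 ⟨(decide (w1 ≤ N k), decide (w2 ≤ N k)), ?_⟩)
  simp only [crossings, Set.mem_ofPred_eq, not_and, not_le] at h1 h2
  simp only [quadrantSteps, quadrant, Set.mem_ofPred_eq]
  by_cases hw1 : w1 ≤ N k <;> by_cases hw2 : w2 ≤ N k <;> simp [hw1, hw2] <;> omega

lemma ENNReal.rpow_sum_le_sum_rpow {ι : Type*} (s : Finset ι) (f : ι → ℝ≥0∞) {p : ℝ}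
    (hp : 0 < p) (hp1 : p ≤ 1) : (∑ i ∈ s, f i) ^ p ≤ ∑ i ∈ s, f i ^ p := by
  classical
  induction s using Finset.cons_induction with
  | empty => simp [ENNReal.zero_rpow_of_pos hp]
  | cons i s hi ih =>
    rw [Finset.sum_cons, Finset.sum_cons]
    exact (ENNReal.rpow_add_le_add_rpow _ _ hp.le hp1).trans (by gcongr)

lemma tsum_subtype_le_of_subsingleton {α : Type*} {s : Set α} (hs : s.Subsingleton)
    {f : α → ℝ≥0∞} {C : ℝ≥0∞} (hf : ∀ x, f x ≤ C) : ∑' x : s, f x ≤ C := by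
  obtain rfl | ⟨x, rfl⟩ := hs.eq_empty_or_singleton
  · simp
  · exact (tsum_singleton x f).trans_le (hf x)

lemma Monotone.tsum_le_crossings_add_quadrantSteps {N : ℕ → ℕ} (hN : Monotone N)
    (w1 w2 : ℕ) (f : ℕ → ℝ≥0∞) :
    ∑' k, f k ≤ ∑' k : crossings N w1, f k + ∑' k : crossings N w2, f k
      + ∑ μ, ∑' k : quadrantSteps N w1 w2 μ, f k :=
  calc ∑' k, f k = ∑' k : (Set.univ : Set ℕ), f k := (tsum_univ f).symm
    _ ≤ ∑' k : ↑(crossings N w1 ∪ crossings N w2 ∪ ⋃ μ, quadrantSteps N w1 w2 μ), f k :=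
      ENNReal.tsum_mono_subtype f fun k _ => hN.mem_crossings_or_quadrantSteps w1 w2 k
    _ ≤ _ := (ENNReal.tsum_union_le f _ _).trans
      (add_le_add (ENNReal.tsum_union_le f _ _) (ENNReal.tsum_iUnion_le f _))

-- The `k`-th summand of `O(a)²`.
noncomputable def blockOscillationSq {E : Type*} [SeminormedAddCommGroup E] (a : ℕ → ℕ → E) (N : ℕ → ℕ)
    (k : ℕ) : ℝ≥0∞ :=
  ⨆ n1 ∈ Set.Icc (N k) (N (k + 1)), ⨆ n2 ∈ Set.Icc (N k) (N (k + 1)),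
    ((‖a n1 n2 - a (N k) (N k)‖₊ : ℝ≥0∞)) ^ 2

lemma blockOscillationSq_le {E : Type*} [SeminormedAddCommGroup E] (a : ℕ → ℕ → E)
    (N : ℕ → ℕ) (k : ℕ) :
    blockOscillationSq a N k ≤ (2 * ⨆ n1, ⨆ n2, (‖a n1 n2‖₊ : ℝ≥0∞)) ^ 2 := by
  have ha : ∀ n1 n2, (‖a n1 n2‖₊ : ℝ≥0∞) ≤ ⨆ n1, ⨆ n2, (‖a n1 n2‖₊ : ℝ≥0∞) := fun n1 n2 =>
    le_iSup₂_of_le n1 n2 le_rfl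
  refine iSup₂_le fun n1 _ => iSup₂_le fun n2 _ => pow_le_pow_left' ?_ 2
  calc (‖a n1 n2 - a (N k) (N k)‖₊ : ℝ≥0∞)
      ≤ ‖a n1 n2‖₊ + ‖a (N k) (N k)‖₊ := mod_cast nnnorm_sub_le _ _
    _ ≤ _ := two_mul (⨆ n1, ⨆ n2, (‖a n1 n2‖₊ : ℝ≥0∞)) ▸ add_le_add (ha _ _) (ha _ _)

theorem oscillation_four_regions_general (w1 w2 : ℕ) (N : ℕ → ℕ) (τ : ℝ) (hτ : 1 < τ)
    (hlac : ∀ k : ℕ, τ * N k ≤ N (k + 1)) (a : ℕ → ℕ → ℂ) :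
    (∑' k : ℕ,
        ⨆ n1 ∈ Set.Icc (N k) (N (k + 1)), ⨆ n2 ∈ Set.Icc (N k) (N (k + 1)),
          ((‖a n1 n2 - a (N k) (N k)‖₊ : ℝ≥0∞)) ^ 2) ^ (1 / 2 : ℝ)
    ≤ 4 * (⨆ n1 : ℕ, ⨆ n2 : ℕ, (‖a n1 n2‖₊ : ℝ≥0∞))
      + ∑ μ : Bool × Bool,
        (∑' k : {k : ℕ //
            ((N k, N k) ∈ {p : ℕ × ℕ |
              (if μ.1 then w1 ≤ p.1 else p.1 < w1) ∧
              (if μ.2 then w2 ≤ p.2 else p.2 < w2)}) ∧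
            ((N (k + 1), N (k + 1)) ∈ {p : ℕ × ℕ |
              (if μ.1 then w1 ≤ p.1 else p.1 < w1) ∧
              (if μ.2 then w2 ≤ p.2 else p.2 < w2)})},
          ⨆ n1 ∈ Set.Icc (N k.1) (N (k.1 + 1)), ⨆ n2 ∈ Set.Icc (N k.1) (N (k.1 + 1)),
            ((‖a n1 n2 - a (N k.1) (N k.1)‖₊ : ℝ≥0∞)) ^ 2) ^ (1 / 2 : ℝ) := by
  set S := ⨆ n1, ⨆ n2, (‖a n1 n2‖₊ : ℝ≥0∞)
  set Q : Bool × Bool → ℝ≥0∞ := fun μ => ∑' k : quadrantSteps N w1 w2 μ, blockOscillationSq a N k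
  change (∑' k, blockOscillationSq a N k) ^ (1 / 2 : ℝ) ≤ 4 * S + ∑ μ, Q μ ^ (1 / 2 : ℝ)
  have hN := monotone_of_lacunary hτ.le hlac
  have hcross : ∀ w, ∑' k : crossings N w, blockOscillationSq a N k ≤ (2 * S) ^ 2 := fun w =>
    tsum_subtype_le_of_subsingleton (hN.crossings_subsingleton w) (blockOscillationSq_le a N)
  have hsqrt : ((2 * S) ^ 2) ^ (1 / 2 : ℝ) = 2 * S := by
    simpa using ENNReal.pow_rpow_inv_natCast two_ne_zero (2 * S)
  calc (∑' k, blockOscillationSq a N k) ^ (1 / 2 : ℝ)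
      ≤ ((2 * S) ^ 2 + (2 * S) ^ 2 + ∑ μ, Q μ) ^ (1 / 2 : ℝ) := by
        refine ENNReal.rpow_le_rpow ?_ (by norm_num)
        refine (hN.tsum_le_crossings_add_quadrantSteps w1 w2 _).trans ?_
        gcongr <;> exact hcross _
    _ ≤ ((2 * S) ^ 2) ^ (1 / 2 : ℝ) + ((2 * S) ^ 2) ^ (1 / 2 : ℝ) + ∑ μ, Q μ ^ (1 / 2 : ℝ) :=
        (ENNReal.rpow_add_le_add_rpow _ _ (by norm_num) (by norm_num)).trans <|
          add_le_add (ENNReal.rpow_add_le_add_rpow _ _ (by norm_num) (by norm_num))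
            (ENNReal.rpow_sum_le_sum_rpow _ _ (by norm_num) (by norm_num))
    _ = 4 * S + ∑ μ, Q μ ^ (1 / 2 : ℝ) := by rw [hsqrt, ← add_mul]; norm_num

/-- Splitting of the two-parameter oscillation seminorm into the four regions
determined by `w = (w1, w2)`: `O(a) ≤ 4·sup|a| + ∑_{μ∈{0,1}²} O_μ(a)`. The regions
are `U^μ = {p : (p.1 < w1 or w1 ≤ p.1 according to μ.1) and likewise for μ.2}` and
`K_μ = {k : (N k, N k), (N (k+1), N (k+1)) ∈ U^μ}`. -/
theorem oscillation_four_regions (w1 w2 : ℕ) (N : ℕ → ℕ) (τ : ℝ) (hτ : 1 < τ)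
    (hlac : ∀ k : ℕ, τ * N k ≤ N (k + 1)) (a : ℕ → ℕ → ℂ)
    (hfin : (⨆ n1 : ℕ, ⨆ n2 : ℕ, (‖a n1 n2‖₊ : ℝ≥0∞)) ≠ ∞) :
    (∑' k : ℕ,
        ⨆ n1 ∈ Set.Icc (N k) (N (k + 1)), ⨆ n2 ∈ Set.Icc (N k) (N (k + 1)),
          ((‖a n1 n2 - a (N k) (N k)‖₊ : ℝ≥0∞)) ^ 2) ^ (1 / 2 : ℝ)
    ≤ 4 * (⨆ n1 : ℕ, ⨆ n2 : ℕ, (‖a n1 n2‖₊ : ℝ≥0∞))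
      + ∑ μ : Bool × Bool,
        (∑' k : {k : ℕ //
            ((N k, N k) ∈ {p : ℕ × ℕ |
              (if μ.1 then w1 ≤ p.1 else p.1 < w1) ∧
              (if μ.2 then w2 ≤ p.2 else p.2 < w2)}) ∧
            ((N (k + 1), N (k + 1)) ∈ {p : ℕ × ℕ |
              (if μ.1 then w1 ≤ p.1 else p.1 < w1) ∧
              (if μ.2 then w2 ≤ p.2 else p.2 < w2)})},
          ⨆ n1 ∈ Set.Icc (N k.1) (N (k.1 + 1)), ⨆ n2 ∈ Set.Icc (N k.1) (N (k.1 + 1)),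
            ((‖a n1 n2 - a (N k.1) (N k.1)‖₊ : ℝ≥0∞)) ^ 2) ^ (1 / 2 : ℝ) :=
  oscillation_four_regions_general w1 w2 N τ hτ hlac a
end
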